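/- arXiv:2110.10018 — 6 statements merged into one kernel-verified Lean document; each statement's English description precedes it below -/
import Mathlib

section
/- Let k ≥ 1, let x_1,…,x_k ∈ ℝ^d, and let q_1,…,q_k ≥ 0 with ∑_{j=1}^k q_j ≤ 1. Define q_0 = 1 − ∑_{j=1}^k q_j. Then the matrix ∑_{j=1}^k q_j x_j x_jᵀ − ∑_{i=1}^k ∑_{j=1}^k q_i q_j x_i x_jᵀ is positive semidefinite, and moreover it dominates (in the Loewner order) the matrix ∑_{j=1}^k q_j q_0 x_j x_jᵀ. -/
open Matrix Finset

private lemma sum_mulVec' {d k : ℕ} (M : Fin k → Matrix (Fin d) (Fin d) ℝ) (v : Fin d → ℝ) :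
    (∑ i, M i) *ᵥ v = ∑ i, (M i) *ᵥ v := by
  ext a
  simp [mulVec, dotProduct, Matrix.sum_apply, Finset.sum_apply, Finset.sum_mul]
  rw [Finset.sum_comm]

private lemma dot_sum' {d k : ℕ} (v : Fin d → ℝ) (w : Fin k → Fin d → ℝ) :
    v ⬝ᵥ (∑ i, w i) = ∑ i, v ⬝ᵥ w i := by
  simp [dotProduct, Finset.sum_apply, Finset.mul_sum]
  rw [Finset.sum_comm]

private lemma quad_form {d k : ℕ} (x y : Fin k → (Fin d → ℝ)) (c : Fin k → ℝ) (v : Fin d → ℝ) :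
    v ⬝ᵥ ((∑ j, c j • vecMulVec (x j) (y j)) *ᵥ v) = ∑ j, c j * ((x j ⬝ᵥ v) * (y j ⬝ᵥ v)) := by
  simp only [dotProduct, mulVec, Matrix.sum_apply, Matrix.smul_apply, vecMulVec_apply,
    smul_eq_mul, Finset.mul_sum, Finset.sum_mul]
  have h1 : ∀ (f : Fin d → Fin d → Fin k → ℝ),
      ∑ a, ∑ b, ∑ j, f a b j = ∑ j, ∑ b, ∑ a, f a b j := by
    intro f
    rw [Finset.sum_comm]
    rw [show (∑ b, ∑ a, ∑ j, f a b j) = ∑ b, ∑ j, ∑ a, f a b j from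
      Finset.sum_congr rfl fun b _ => Finset.sum_comm]
    rw [Finset.sum_comm]
  rw [h1]
  refine Finset.sum_congr rfl fun j _ => Finset.sum_congr rfl fun b _ =>
    Finset.sum_congr rfl fun a _ => by ring

private lemma quad_double {d k : ℕ} (x : Fin k → (Fin d → ℝ)) (q : Fin k → ℝ) (v : Fin d → ℝ) :
    v ⬝ᵥ ((∑ i, ∑ j, (q i * q j) • vecMulVec (x i) (x j)) *ᵥ v)
      = (∑ j, q j * (x j ⬝ᵥ v))^2 := by
  rw [sum_mulVec', dot_sum']
  simp only [quad_form]
  rw [sq, Finset.sum_mul_sum]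
  refine Finset.sum_congr rfl fun i _ => Finset.sum_congr rfl fun j _ => by ring

private lemma cs_key {k : ℕ} (q a : Fin k → ℝ) (hq : ∀ j, 0 ≤ q j) :
    (∑ j, q j * a j)^2 ≤ (∑ j, q j) * ∑ j, q j * (a j)^2 := by
  have h := Finset.sum_mul_sq_le_sq_mul_sq Finset.univ (fun j => Real.sqrt (q j))
    (fun j => Real.sqrt (q j) * a j)
  calc (∑ j, q j * a j)^2 = (∑ j, Real.sqrt (q j) * (Real.sqrt (q j) * a j))^2 := by
        congr 1; exact Finset.sum_congr rfl fun j _ => by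
          rw [← mul_assoc, Real.mul_self_sqrt (hq j)]
    _ ≤ (∑ j, Real.sqrt (q j) ^ 2) * ∑ j, (Real.sqrt (q j) * a j)^2 := h
    _ = (∑ j, q j) * ∑ j, q j * (a j)^2 := by
        congr 1
        · exact Finset.sum_congr rfl fun j _ => Real.sq_sqrt (hq j)
        · exact Finset.sum_congr rfl fun j _ => by rw [mul_pow, Real.sq_sqrt (hq j)]

theorem stmt_2 (d k : ℕ) (hk : 1 ≤ k) (x : Fin k → (Fin d → ℝ)) (q : Fin k → ℝ)
    (hq : ∀ j, 0 ≤ q j) (hsum : ∑ j, q j ≤ 1) :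
    Matrix.PosSemidef
      ((∑ j, q j • vecMulVec (x j) (x j)) -
        ∑ i, ∑ j, (q i * q j) • vecMulVec (x i) (x j)) ∧
    Matrix.PosSemidef
      ((∑ j, q j • vecMulVec (x j) (x j)) -
        (∑ i, ∑ j, (q i * q j) • vecMulVec (x i) (x j)) -
        ∑ j, (q j * (1 - ∑ i, q i)) • vecMulVec (x j) (x j)) := by
  -- Hermitian parts
  have hHerm1 : ((∑ j, q j • vecMulVec (x j) (x j)) -
      ∑ i, ∑ j, (q i * q j) • vecMulVec (x i) (x j)).IsHermitian := by
    unfold Matrix.IsHermitian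
    ext i j
    simp only [conjTranspose_apply, Matrix.sub_apply, Matrix.sum_apply, Matrix.smul_apply,
      vecMulVec_apply, smul_eq_mul, star_trivial]
    congr 1
    · exact Finset.sum_congr rfl fun a _ => by ring
    · rw [Finset.sum_comm]
      exact Finset.sum_congr rfl fun a _ => Finset.sum_congr rfl fun b _ => by ring
  have hHerm2 : ((∑ j, q j • vecMulVec (x j) (x j)) -
      (∑ i, ∑ j, (q i * q j) • vecMulVec (x i) (x j)) -
      ∑ j, (q j * (1 - ∑ i, q i)) • vecMulVec (x j) (x j)).IsHermitian := by
    refine hHerm1.sub ?_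
    unfold Matrix.IsHermitian
    ext i j
    simp only [conjTranspose_apply, Matrix.sum_apply, Matrix.smul_apply,
      vecMulVec_apply, smul_eq_mul, star_trivial]
    exact Finset.sum_congr rfl fun a _ => by ring
  have hnn : ∀ v : Fin d → ℝ, 0 ≤ ∑ j, q j * ((x j ⬝ᵥ v))^2 :=
    fun v => Finset.sum_nonneg fun j _ => mul_nonneg (hq j) (sq_nonneg _)
  constructor
  · refine Matrix.PosSemidef.of_dotProduct_mulVec_nonneg hHerm1 fun v => ?_
    have : v ⬝ᵥ (((∑ j, q j • vecMulVec (x j) (x j)) -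
        ∑ i, ∑ j, (q i * q j) • vecMulVec (x i) (x j)) *ᵥ v)
        = (∑ j, q j * ((x j ⬝ᵥ v))^2) - (∑ j, q j * (x j ⬝ᵥ v))^2 := by
      rw [Matrix.sub_mulVec, dotProduct_sub, quad_double]
      congr 1
      rw [quad_form]
      exact Finset.sum_congr rfl fun j _ => by ring
    rw [star_trivial, this]
    have h1 := cs_key q (fun j => x j ⬝ᵥ v) hq
    have h2 : (∑ j, q j) * ∑ j, q j * ((x j ⬝ᵥ v))^2 ≤ ∑ j, q j * ((x j ⬝ᵥ v))^2 := by
      nlinarith [hnn v]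
    linarith
  · refine Matrix.PosSemidef.of_dotProduct_mulVec_nonneg hHerm2 fun v => ?_
    have : v ⬝ᵥ (((∑ j, q j • vecMulVec (x j) (x j)) -
        (∑ i, ∑ j, (q i * q j) • vecMulVec (x i) (x j)) -
        ∑ j, (q j * (1 - ∑ i, q i)) • vecMulVec (x j) (x j)) *ᵥ v)
        = (∑ i, q i) * (∑ j, q j * ((x j ⬝ᵥ v))^2) - (∑ j, q j * (x j ⬝ᵥ v))^2 := by
      rw [Matrix.sub_mulVec, Matrix.sub_mulVec, dotProduct_sub, dotProduct_sub,
        quad_double, quad_form, quad_form]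
      rw [show (∑ j, (q j * (1 - ∑ i, q i)) * ((x j ⬝ᵥ v) * (x j ⬝ᵥ v)))
          = (∑ j, q j * ((x j ⬝ᵥ v) * (x j ⬝ᵥ v))) - (∑ i, q i) * ∑ j, q j * ((x j ⬝ᵥ v) * (x j ⬝ᵥ v))
          from by rw [Finset.mul_sum, ← Finset.sum_sub_distrib];
                  exact Finset.sum_congr rfl fun j _ => by ring]
      have : ∀ j, q j * ((x j ⬝ᵥ v) * (x j ⬝ᵥ v)) = q j * ((x j ⬝ᵥ v))^2 :=
        fun j => by ring
      simp only [this]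
      ring
    rw [star_trivial, this]
    have h1 := cs_key q (fun j => x j ⬝ᵥ v) hq
    linarith
end

section
/- Let k ≥ 1, x_1,…,x_k ∈ ℝ^d, let q_1,…,q_k ≥ 0 with ∑_{j=1}^k q_j ≤ 1, and let y_1,…,y_k ∈ {0,1} with ∑_{j=1}^k y_j ≤ 1. Set g = ∑_{j=1}^k (q_j − y_j) x_j. Then the matrix g gᵀ is dominated in the Loewner order by 2 ∑_{j=1}^k x_j x_jᵀ, and moreover gᵀ g ≤ 2 ∑_{j=1}^k x_jᵀ x_j. -/
open Matrix Finset

private lemma quad_aux (d : ℕ) (a v : Fin d → ℝ) :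
    v ⬝ᵥ (vecMulVec a a *ᵥ v) = (a ⬝ᵥ v) ^ 2 := by
  simp only [dotProduct, mulVec, vecMulVec_apply, sq]
  rw [Finset.sum_mul_sum]
  refine Finset.sum_congr rfl fun i _ => ?_
  rw [Finset.mul_sum]
  exact Finset.sum_congr rfl fun j _ => by ring

private lemma sumMulVec_aux (d k : ℕ) (A : Fin k → Matrix (Fin d) (Fin d) ℝ) (v : Fin d → ℝ) :
    (∑ j, A j) *ᵥ v = ∑ j, (A j) *ᵥ v := by
  ext i
  simp only [mulVec, dotProduct, Finset.sum_apply, Matrix.sum_apply, Finset.sum_mul]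
  exact Finset.sum_comm

private lemma dotSum_aux (d k : ℕ) (w : Fin k → Fin d → ℝ) (v : Fin d → ℝ) :
    (∑ j, w j) ⬝ᵥ v = ∑ j, (w j) ⬝ᵥ v := by
  simp only [dotProduct, Finset.sum_apply, Finset.sum_mul]
  exact Finset.sum_comm

private lemma dotSum_aux' (d k : ℕ) (w : Fin k → Fin d → ℝ) (v : Fin d → ℝ) :
    v ⬝ᵥ (∑ j, w j) = ∑ j, v ⬝ᵥ (w j) := by
  rw [dotProduct_comm, dotSum_aux]
  exact Finset.sum_congr rfl fun j _ => dotProduct_comm _ _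

private lemma key_aux (k : ℕ) (c a : Fin k → ℝ) (hc1 : ∀ j, |c j| ≤ 1)
    (hc2 : ∑ j, |c j| ≤ 2) : (∑ j, c j * a j) ^ 2 ≤ 2 * ∑ j, a j ^ 2 := by
  have h1 : (∑ j, c j * a j) ^ 2 ≤ (∑ j, |c j| * |a j|) ^ 2 := by
    rw [← sq_abs]
    refine pow_le_pow_left₀ (abs_nonneg _) ?_ 2
    refine le_trans (Finset.abs_sum_le_sum_abs _ _) (le_of_eq ?_)
    exact Finset.sum_congr rfl fun j _ => abs_mul _ _
  have h2 : (∑ j, |c j| * |a j|) ^ 2 ≤ (∑ j, |c j|) * (∑ j, |c j| * a j ^ 2) := by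
    refine Finset.sum_sq_le_sum_mul_sum_of_sq_eq_mul _
      (fun j _ => abs_nonneg _) (fun j _ => mul_nonneg (abs_nonneg _) (sq_nonneg _))
      (fun j _ => ?_)
    rw [mul_pow, sq_abs (a j)]; ring
  have h3 : (∑ j, |c j|) * (∑ j, |c j| * a j ^ 2) ≤ 2 * ∑ j, a j ^ 2 := by
    refine mul_le_mul hc2 (Finset.sum_le_sum fun j _ =>
      mul_le_of_le_one_left (sq_nonneg _) (hc1 j))
      (Finset.sum_nonneg fun j _ => mul_nonneg (abs_nonneg _) (sq_nonneg _)) (by norm_num)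
  linarith

theorem stmt_4 (d k : ℕ) (hk : 1 ≤ k) (x : Fin k → (Fin d → ℝ))
    (q : Fin k → ℝ) (hq : ∀ j, 0 ≤ q j) (hqsum : ∑ j, q j ≤ 1)
    (y : Fin k → ℝ) (hy : ∀ j, y j = 0 ∨ y j = 1) (hysum : ∑ j, y j ≤ 1) :
    Matrix.PosSemidef
      ((2 : ℝ) • (∑ j, vecMulVec (x j) (x j)) -
        vecMulVec (∑ j, (q j - y j) • x j) (∑ j, (q j - y j) • x j)) ∧
    (∑ j, (q j - y j) • x j) ⬝ᵥ (∑ j, (q j - y j) • x j) ≤ 2 * ∑ j, x j ⬝ᵥ x j := by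
  set c : Fin k → ℝ := fun j => q j - y j with hc
  have hy0 : ∀ j, 0 ≤ y j := fun j => by rcases hy j with h | h <;> rw [h] <;> norm_num
  have hq1 : ∀ j, q j ≤ 1 := fun j =>
    le_trans (Finset.single_le_sum (fun i _ => hq i) (Finset.mem_univ j)) hqsum
  have hc1 : ∀ j, |c j| ≤ 1 := by
    intro j
    rw [abs_le]
    rcases hy j with h | h <;> simp only [hc, h] <;>
      constructor <;> nlinarith [hq j, hq1 j]
  have hc2 : ∑ j, |c j| ≤ 2 := by
    calc ∑ j, |c j| ≤ ∑ j, (q j + y j) := by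
          refine Finset.sum_le_sum fun j _ => ?_
          refine le_trans (abs_sub (q j) (y j)) ?_
          rw [abs_of_nonneg (hq j), abs_of_nonneg (hy0 j)]
      _ = (∑ j, q j) + ∑ j, y j := Finset.sum_add_distrib
      _ ≤ 2 := by linarith
  have hgdot : ∀ v : Fin d → ℝ, (∑ j, c j • x j) ⬝ᵥ v = ∑ j, c j * (x j ⬝ᵥ v) := by
    intro v
    rw [dotSum_aux]
    exact Finset.sum_congr rfl fun j _ => smul_dotProduct _ _ _
  have hva : ∀ a : Fin d → ℝ, (vecMulVec a a).IsHermitian := fun a => by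
    ext i j; simp [conjTranspose_apply, vecMulVec_apply, mul_comm]
  have hS : (∑ j, vecMulVec (x j) (x j)).IsHermitian := by
    unfold Matrix.IsHermitian
    rw [Matrix.conjTranspose_sum]
    exact Finset.sum_congr rfl fun j _ => hva (x j)
  constructor
  · refine Matrix.posSemidef_iff_dotProduct_mulVec.mpr ⟨?_, ?_⟩
    · exact Matrix.IsHermitian.sub (by
        unfold Matrix.IsHermitian
        rw [Matrix.conjTranspose_smul]
        congr 1) (hva _)
    · intro v
      have hv : star v = v := rfl
      rw [hv, Matrix.sub_mulVec, dotProduct_sub, smul_mulVec, dotProduct_smul,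
        sumMulVec_aux, dotSum_aux']
      have h1 : ∑ j, v ⬝ᵥ (vecMulVec (x j) (x j) *ᵥ v) = ∑ j, (x j ⬝ᵥ v) ^ 2 :=
        Finset.sum_congr rfl fun j _ => quad_aux d (x j) v
      rw [h1, quad_aux, hgdot]
      have := key_aux k c (fun j => x j ⬝ᵥ v) hc1 hc2
      simp only [smul_eq_mul]
      linarith
  · have hg : ∀ i, (∑ j, c j • x j) i = ∑ j, c j * x j i := by
      intro i
      simp [Finset.sum_apply]
    have hexp : (∑ j, c j • x j) ⬝ᵥ (∑ j, c j • x j) = ∑ i, (∑ j, c j * x j i) ^ 2 := by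
      simp only [dotProduct, hg, sq]
    rw [hexp]
    calc ∑ i, (∑ j, c j * x j i) ^ 2 ≤ ∑ i : Fin d, 2 * ∑ j, (x j i) ^ 2 :=
          Finset.sum_le_sum fun i _ => key_aux k c (fun j => x j i) hc1 hc2
      _ = 2 * ∑ j, x j ⬝ᵥ x j := by
          rw [← Finset.mul_sum, Finset.sum_comm]
          simp [dotProduct, sq]
end

section
/- Let a_1,…,a_n, μ_1,…,μ_n ∈ ℝ and define ψ(s) = log(∑_{i=1}^n exp(a_i s + μ_i)). Then ψ is infinitely differentiable and for all s ∈ ℝ, |ψ'''(s)| ≤ √6 · ‖a‖₂ · ψ''(s), where ‖a‖₂ = (∑_{i=1}^n a_i²)^{1/2}. -/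
open Finset

private noncomputable def gfun (n : ℕ) (a μ : Fin n → ℝ) (k : ℕ) (s : ℝ) : ℝ :=
  ∑ i, (a i) ^ k * Real.exp (a i * s + μ i)

private lemma hasDerivAt_gfun (n : ℕ) (a μ : Fin n → ℝ) (k : ℕ) (s : ℝ) :
    HasDerivAt (gfun n a μ k) (gfun n a μ (k + 1) s) s := by
  apply HasDerivAt.fun_sum
  intro i _
  have h1 : HasDerivAt (fun s : ℝ => a i * s + μ i) (a i) s := by
    simpa using ((hasDerivAt_id s).const_mul (a i)).add_const (μ i)
  have h2 := (h1.exp).const_mul ((a i) ^ k)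
  convert h2 using 1
  · rfl
  ring

private lemma gfun_zero_pos (n : ℕ) (hn : 1 ≤ n) (a μ : Fin n → ℝ) (s : ℝ) :
    0 < gfun n a μ 0 s := by
  apply Finset.sum_pos
  · intro i _
    simp [pow_zero, one_mul, Real.exp_pos]
  · exact ⟨⟨0, hn⟩, Finset.mem_univ _⟩

theorem stmt_6 (n : ℕ) (hn : 1 ≤ n) (a μ : Fin n → ℝ) :
    ContDiff ℝ (⊤ : ℕ∞) (fun s : ℝ => Real.log (∑ i, Real.exp (a i * s + μ i))) ∧
    ∀ s : ℝ,
      |iteratedDeriv 3 (fun s : ℝ => Real.log (∑ i, Real.exp (a i * s + μ i))) s| ≤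
        Real.sqrt 6 * Real.sqrt (∑ i, (a i) ^ 2) *
          iteratedDeriv 2 (fun s : ℝ => Real.log (∑ i, Real.exp (a i * s + μ i))) s := by
  set g : ℕ → ℝ → ℝ := gfun n a μ with hgdef
  have hfun : (fun s : ℝ => Real.log (∑ i, Real.exp (a i * s + μ i)))
      = fun s => Real.log (g 0 s) := by
    funext s
    simp [hgdef, gfun]
  have hpos : ∀ s, 0 < g 0 s := gfun_zero_pos n hn a μ
  have hd : ∀ k s, HasDerivAt (g k) (g (k + 1) s) s := fun k s => hasDerivAt_gfun n a μ k s
  -- smoothness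
  have hsmooth : ContDiff ℝ (⊤ : ℕ∞) (fun s : ℝ => Real.log (∑ i, Real.exp (a i * s + μ i))) := by
    rw [hfun]
    apply ContDiff.log
    · apply ContDiff.sum
      intro i _
      exact contDiff_const.mul
        (((contDiff_const.mul contDiff_id).add contDiff_const).exp)
    · intro s
      exact (hpos s).ne'
  refine ⟨hsmooth, fun s => ?_⟩
  -- first derivative
  have hderiv1 : deriv (fun s : ℝ => Real.log (∑ i, Real.exp (a i * s + μ i)))
      = fun s => g 1 s / g 0 s := by
    funext t
    rw [hfun]
    exact ((hd 0 t).log (hpos t).ne').deriv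
  -- second derivative as a function
  have hderiv2 : ∀ t, deriv (fun u => g 1 u / g 0 u) t
      = (g 2 t * g 0 t - g 1 t * g 1 t) / (g 0 t) ^ 2 := by
    intro t
    exact (((hd 1 t).div (hd 0 t) (hpos t).ne')).deriv
  have hit2 : ∀ t, iteratedDeriv 2 (fun s : ℝ => Real.log (∑ i, Real.exp (a i * s + μ i))) t
      = (g 2 t * g 0 t - g 1 t * g 1 t) / (g 0 t) ^ 2 := by
    intro t
    rw [show (2 : ℕ) = 1 + 1 from rfl, iteratedDeriv_succ, iteratedDeriv_one, hderiv1]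
    exact hderiv2 t
  -- third derivative at s
  have hd3 : HasDerivAt (fun t => (g 2 t * g 0 t - g 1 t * g 1 t) / (g 0 t) ^ 2)
      (((g 3 s * g 0 s + g 2 s * g 1 s - (g 2 s * g 1 s + g 1 s * g 2 s)) * (g 0 s) ^ 2
        - (g 2 s * g 0 s - g 1 s * g 1 s) * ((2 : ℕ) * (g 0 s) ^ (2 - 1) * g 1 s))
        / ((g 0 s) ^ 2) ^ 2) s := by
    exact (((hd 2 s).mul (hd 0 s)).sub ((hd 1 s).mul (hd 1 s))).div
      ((hd 0 s).pow 2) (pow_ne_zero 2 (hpos s).ne')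
  have hit3 : iteratedDeriv 3 (fun s : ℝ => Real.log (∑ i, Real.exp (a i * s + μ i))) s
      = ((g 3 s * g 0 s + g 2 s * g 1 s - (g 2 s * g 1 s + g 1 s * g 2 s)) * (g 0 s) ^ 2
        - (g 2 s * g 0 s - g 1 s * g 1 s) * ((2 : ℕ) * (g 0 s) ^ (2 - 1) * g 1 s))
        / ((g 0 s) ^ 2) ^ 2 := by
    rw [show (3 : ℕ) = 2 + 1 from rfl, iteratedDeriv_succ]
    have : iteratedDeriv 2 (fun s : ℝ => Real.log (∑ i, Real.exp (a i * s + μ i)))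
        = fun t => (g 2 t * g 0 t - g 1 t * g 1 t) / (g 0 t) ^ 2 := funext hit2
    rw [this]
    exact hd3.deriv
  -- now the algebra / inequality at point s
  set c0 := g 0 s with hc0
  set c1 := g 1 s with hc1
  set c2 := g 2 s with hc2
  set c3 := g 3 s with hc3
  have hc0pos : 0 < c0 := hpos s
  set E : Fin n → ℝ := fun i => Real.exp (a i * s + μ i) with hE
  have hEpos : ∀ i, 0 < E i := fun i => Real.exp_pos _
  have hs0 : c0 = ∑ i, E i := by simp [hc0, hgdef, gfun, hE]
  have hs1 : c1 = ∑ i, a i * E i := by simp [hc1, hgdef, gfun, hE]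
  have hs2 : c2 = ∑ i, (a i) ^ 2 * E i := by simp [hc2, hgdef, gfun, hE]
  have hs3 : c3 = ∑ i, (a i) ^ 3 * E i := by simp [hc3, hgdef, gfun, hE]
  set m := c1 / c0 with hm
  set A := Real.sqrt (∑ i, (a i) ^ 2) with hA
  have hAnn : 0 ≤ A := Real.sqrt_nonneg _
  -- variance and third central moment
  set V := ∑ i, (E i / c0) * (a i - m) ^ 2 with hV
  set T := ∑ i, (E i / c0) * (a i - m) ^ 3 with hT
  have hVval : V = (c2 * c0 - c1 * c1) / c0 ^ 2 := by
    have step : ∀ i ∈ Finset.univ, (E i / c0) * (a i - m) ^ 2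
        = ((a i) ^ 2 * E i) / c0 - (a i * E i) * (2 * c1 / c0 ^ 2)
          + E i * (c1 ^ 2 / c0 ^ 3) := by
      intro i _
      rw [hm]
      field_simp
      ring
    rw [hV, Finset.sum_congr rfl step]
    rw [Finset.sum_add_distrib, Finset.sum_sub_distrib, ← Finset.sum_div,
      ← Finset.sum_mul, ← Finset.sum_mul, ← hs2, ← hs1, ← hs0]
    field_simp
    ring
  have hTval : T = (c3 * c0 ^ 2 - 3 * c2 * c1 * c0 + 2 * c1 ^ 3) / c0 ^ 3 := by
    have step : ∀ i ∈ Finset.univ, (E i / c0) * (a i - m) ^ 3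
        = ((a i) ^ 3 * E i) / c0 - ((a i) ^ 2 * E i) * (3 * c1 / c0 ^ 2)
          + (a i * E i) * (3 * c1 ^ 2 / c0 ^ 3) - E i * (c1 ^ 3 / c0 ^ 4) := by
      intro i _
      rw [hm]
      field_simp
      ring
    rw [hT, Finset.sum_congr rfl step]
    rw [Finset.sum_sub_distrib, Finset.sum_add_distrib, Finset.sum_sub_distrib,
      ← Finset.sum_div, ← Finset.sum_mul, ← Finset.sum_mul, ← Finset.sum_mul,
      ← hs3, ← hs2, ← hs1, ← hs0]
    field_simp
    ring
  have hit2' : iteratedDeriv 2 (fun s : ℝ => Real.log (∑ i, Real.exp (a i * s + μ i))) s = V := by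
    rw [hit2 s, hVval]
  have hit3' : iteratedDeriv 3 (fun s : ℝ => Real.log (∑ i, Real.exp (a i * s + μ i))) s = T := by
    rw [hit3, hTval]
    field_simp
    ring
  rw [hit2', hit3']
  -- bounds on |a i| and |m|
  have habs : ∀ i, |a i| ≤ A := by
    intro i
    rw [hA, ← Real.sqrt_sq_eq_abs (a i)]
    apply Real.sqrt_le_sqrt
    exact Finset.single_le_sum (fun j _ => sq_nonneg (a j)) (Finset.mem_univ i)
  have hmabs : |m| ≤ A := by
    rw [hm, abs_div, abs_of_pos hc0pos, div_le_iff₀ hc0pos]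
    calc |c1| ≤ ∑ i, |a i * E i| := by rw [hs1]; exact Finset.abs_sum_le_sum_abs _ _
      _ ≤ ∑ i, A * E i := by
          apply Finset.sum_le_sum
          intro i _
          rw [abs_mul, abs_of_pos (hEpos i)]
          exact mul_le_mul_of_nonneg_right (habs i) (hEpos i).le
      _ = A * c0 := by rw [hs0, Finset.mul_sum]
  have hxi : ∀ i, |a i - m| ≤ 2 * A := by
    intro i
    calc |a i - m| ≤ |a i| + |m| := abs_sub _ _
      _ ≤ A + A := add_le_add (habs i) hmabs
      _ = 2 * A := by ring
  have hVnn : 0 ≤ V := by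
    apply Finset.sum_nonneg
    intro i _
    exact mul_nonneg (div_nonneg (hEpos i).le hc0pos.le) (sq_nonneg _)
  -- main bound
  have hbound : |T| ≤ 2 * A * V := by
    calc |T| ≤ ∑ i, |(E i / c0) * (a i - m) ^ 3| := Finset.abs_sum_le_sum_abs _ _
      _ ≤ ∑ i, (2 * A) * ((E i / c0) * (a i - m) ^ 2) := by
          apply Finset.sum_le_sum
          intro i _
          have h1 : |(E i / c0) * (a i - m) ^ 3| = (E i / c0) * (|a i - m| * (a i - m) ^ 2) := by
            rw [abs_mul, abs_of_nonneg (div_nonneg (hEpos i).le hc0pos.le)]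
            congr 1
            rw [show (3 : ℕ) = 1 + 2 from rfl, pow_add, pow_one, abs_mul, abs_pow, sq_abs]
          rw [h1]
          have h2 : |a i - m| * (a i - m) ^ 2 ≤ (2 * A) * (a i - m) ^ 2 :=
            mul_le_mul_of_nonneg_right (hxi i) (sq_nonneg _)
          calc (E i / c0) * (|a i - m| * (a i - m) ^ 2)
              ≤ (E i / c0) * ((2 * A) * (a i - m) ^ 2) :=
                mul_le_mul_of_nonneg_left h2 (div_nonneg (hEpos i).le hc0pos.le)
            _ = (2 * A) * ((E i / c0) * (a i - m) ^ 2) := by ring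
      _ = 2 * A * V := by rw [hV, ← Finset.mul_sum]
  have hsqrt6 : (2 : ℝ) ≤ Real.sqrt 6 := by
    nlinarith [Real.sq_sqrt (by norm_num : (6:ℝ) ≥ 0), Real.sqrt_nonneg (6:ℝ)]
  calc |T| ≤ 2 * A * V := hbound
    _ ≤ Real.sqrt 6 * A * V := by
        apply mul_le_mul_of_nonneg_right _ hVnn
        exact mul_le_mul_of_nonneg_right hsqrt6 hAnn
end

section
/- Let f : ℝ^n → ℝ be an M-self-concordant-like function (so that exp(−M‖y−x‖)∇²f(x) ⪯ ∇²f(y) for all x,y). Then for all β₁, β₂ in the Euclidean ball of radius W and all u ∈ ℝ^n, uᵀ (∫₀¹ ∫₀¹ z · ∇²f(β₁ + z w (β₂ − β₁)) dz dw) u ≥ (1 / (2(1 + 2MW))) · uᵀ ∇²f(β₁) u. In particular, since ‖β₁−β₂‖ ≤ 2W, the bound 1/(2(1+M‖β₁−β₂‖)) ≥ 1/(2(1+2MW)) applies. -/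
/-- Directional second derivative of `f` at `x` along `u`:
`uᵀ ∇²f(x) u = d²/dt² f(x + t u) |_{t=0}`. -/
noncomputable def dirD2 {n : ℕ} (f : EuclideanSpace ℝ (Fin n) → ℝ)
    (x u : EuclideanSpace ℝ (Fin n)) : ℝ :=
  iteratedDeriv 2 (fun t : ℝ => f (x + t • u)) 0

lemma line_hasDerivAt {n : ℕ} (x u : EuclideanSpace ℝ (Fin n)) (t : ℝ) :
    HasDerivAt (fun s : ℝ => x + s • u) u t := by
  simpa using (((hasDerivAt_id t).smul_const u).const_add x)

lemma dirD2_eq {n : ℕ} {f : EuclideanSpace ℝ (Fin n) → ℝ} (hf : ContDiff ℝ 3 f)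
    (x u : EuclideanSpace ℝ (Fin n)) :
    dirD2 f x u = fderiv ℝ (fderiv ℝ f) x u u := by
  have hf' : ContDiff ℝ 2 (fderiv ℝ f) := hf.fderiv_right (by norm_num)
  have hd1 : deriv (fun t : ℝ => f (x + t • u)) = fun t => fderiv ℝ f (x + t • u) u := by
    funext t
    exact (((hf.differentiable (by norm_num)) (x + t • u)).hasFDerivAt.comp_hasDerivAt t
      (line_hasDerivAt x u t)).deriv
  have h2 : HasDerivAt (fun t : ℝ => fderiv ℝ f (x + t • u))
      (fderiv ℝ (fderiv ℝ f) x u) 0 := by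
    have hx : HasFDerivAt (fderiv ℝ f) (fderiv ℝ (fderiv ℝ f) x) x :=
      ((hf'.differentiable (by norm_num)) x).hasFDerivAt
    have hx' : HasFDerivAt (fderiv ℝ f) (fderiv ℝ (fderiv ℝ f) x) (x + (0:ℝ) • u) := by
      simpa using hx
    exact hx'.comp_hasDerivAt 0 (line_hasDerivAt x u 0)
  have h3 : HasDerivAt (fun t : ℝ => fderiv ℝ f (x + t • u) u)
      (fderiv ℝ (fderiv ℝ f) x u u) 0 := by
    simpa using h2.clm_apply (hasDerivAt_const (0:ℝ) u)
  rw [dirD2, iteratedDeriv_succ, iteratedDeriv_one, hd1]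
  exact h3.deriv

lemma dirD2_cont {n : ℕ} {f : EuclideanSpace ℝ (Fin n) → ℝ} (hf : ContDiff ℝ 3 f)
    (u : EuclideanSpace ℝ (Fin n)) : Continuous fun x => dirD2 f x u := by
  have hf' : ContDiff ℝ 2 (fderiv ℝ f) := hf.fderiv_right (by norm_num)
  have hc : Continuous (fderiv ℝ (fderiv ℝ f)) := hf'.continuous_fderiv (by norm_num)
  simp_rw [dirD2_eq hf]
  exact (hc.clm_apply continuous_const).clm_apply continuous_const

lemma dirD2_nonneg {n : ℕ} {f : EuclideanSpace ℝ (Fin n) → ℝ} {M : ℝ}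
    (hM : 0 < M) (hf : ContDiff ℝ 3 f)
    (hsc : ∀ x y u : EuclideanSpace ℝ (Fin n),
      Real.exp (-(M * ‖y - x‖)) * dirD2 f x u ≤ dirD2 f y u)
    (x u : EuclideanSpace ℝ (Fin n)) : 0 ≤ dirD2 f x u := by
  rcases Nat.eq_zero_or_pos n with hn | hn
  · subst hn
    have hu : u = 0 := Subsingleton.elim u 0
    rw [dirD2_eq hf, hu]
    simp
  · set v : EuclideanSpace ℝ (Fin n) := EuclideanSpace.single ⟨0, hn⟩ 1 with hv
    have hvn : ‖v‖ = 1 := by simp [hv]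
    have h1 := hsc x (x + v) u
    have h2 := hsc (x + v) x u
    have hxy : ‖(x + v) - x‖ = 1 := by simpa [add_sub_cancel_left] using hvn
    have hyx : ‖x - (x + v)‖ = 1 := by
      rw [← norm_neg]; simpa [neg_sub] using hxy
    rw [hxy] at h1
    rw [hyx] at h2
    have hexp : Real.exp (-(M * 1)) < 1 := by
      rw [Real.exp_lt_one_iff]; linarith
    set E := Real.exp (-(M * 1)) with hE
    have hEpos : 0 < E := Real.exp_pos _
    have h3 : E * (E * dirD2 f x u) ≤ E * dirD2 f (x + v) u :=
      mul_le_mul_of_nonneg_left h1 hEpos.le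
    have h4 : E * (E * dirD2 f x u) ≤ dirD2 f x u := le_trans h3 h2
    by_contra hneg
    push_neg at hneg
    have hE2 : E * E < 1 := by nlinarith
    have h5 : (1:ℝ) * dirD2 f x u < (E * E) * dirD2 f x u :=
      mul_lt_mul_of_neg_right hE2 hneg
    nlinarith

lemma exp_integral_lower (a : ℝ) (ha : 0 ≤ a) :
    1 / (1 + a) ≤ ∫ w in (0:ℝ)..1, Real.exp (-(a * w)) := by
  rcases eq_or_lt_of_le ha with rfl | ha'
  · simp
  · have hderiv : ∀ w ∈ Set.uIcc (0:ℝ) 1,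
        HasDerivAt (fun w => Real.exp (-(a * w)) * (-1 / a)) (Real.exp (-(a * w))) w := by
      intro w _
      have h1 : HasDerivAt (fun w : ℝ => Real.exp (-(a * w)))
          (Real.exp (-(a * w)) * (-a)) w := by
        have := (((hasDerivAt_id w).const_mul a).neg).exp
        simpa [mul_comm] using this
      have := h1.mul_const (-1 / a)
      rw [mul_assoc, show -a * (-1 / a) = (1:ℝ) by field_simp [ha'.ne'], mul_one] at this
      exact this
    have hint : IntervalIntegrable (fun w => Real.exp (-(a * w))) MeasureTheory.volume 0 1 :=
      (Real.continuous_exp.comp (by continuity)).intervalIntegrable 0 1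
    rw [intervalIntegral.integral_eq_sub_of_hasDerivAt hderiv hint]
    have h1 : Real.exp (-a) * (1 + a) ≤ 1 := by
      have h := mul_le_mul_of_nonneg_left (Real.add_one_le_exp a) (Real.exp_pos (-a)).le
      rwa [← Real.exp_add, neg_add_cancel, Real.exp_zero, add_comm a 1] at h
    have ha1 : (0:ℝ) < 1 + a := by linarith
    have heval : Real.exp (-(a * 1)) * (-1 / a) - Real.exp (-(a * 0)) * (-1 / a)
        = (1 - Real.exp (-a)) / a := by
      simp only [mul_one, mul_zero, neg_zero, Real.exp_zero]
      ring
    rw [heval, div_le_div_iff₀ ha1 ha']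
    nlinarith [h1]

theorem stmt_8 (n : ℕ) (f : EuclideanSpace ℝ (Fin n) → ℝ) (M W : ℝ)
    (hM : 0 < M) (hW : 0 < W) (hf : ContDiff ℝ 3 f)
    (hsc : ∀ x y u : EuclideanSpace ℝ (Fin n),
      Real.exp (-(M * ‖y - x‖)) * dirD2 f x u ≤ dirD2 f y u) :
    ∀ β₁ β₂ : EuclideanSpace ℝ (Fin n), ‖β₁‖ ≤ W → ‖β₂‖ ≤ W →
      ∀ u : EuclideanSpace ℝ (Fin n),
        (1 / (2 * (1 + 2 * M * W))) * dirD2 f β₁ u ≤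
          ∫ z in (0:ℝ)..1, ∫ w in (0:ℝ)..1,
            z * dirD2 f (β₁ + (z * w) • (β₂ - β₁)) u := by
  intro β₁ β₂ h1 h2 u
  set d := β₂ - β₁ with hd_def
  set c := 2 * M * W with hc_def
  have hc0 : 0 < c := by positivity
  set D := dirD2 f β₁ u with hD_def
  have hG : Continuous fun x => dirD2 f x u := dirD2_cont hf u
  have hD0 : 0 ≤ D := dirD2_nonneg hM hf hsc β₁ u
  have hdnorm : ‖d‖ ≤ 2 * W := by
    calc ‖d‖ ≤ ‖β₂‖ + ‖β₁‖ := norm_sub_le _ _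
      _ ≤ 2 * W := by linarith
  -- pointwise bound
  have hpt : ∀ z ∈ Set.Icc (0:ℝ) 1, ∀ w ∈ Set.Icc (0:ℝ) 1,
      z * Real.exp (-(c * z * w)) * D ≤ z * dirD2 f (β₁ + (z * w) • d) u := by
    intro z hz w hw
    have hsc' := hsc β₁ (β₁ + (z * w) • d) u
    have hnorm : ‖(β₁ + (z * w) • d) - β₁‖ = (z * w) * ‖d‖ := by
      rw [add_sub_cancel_left, norm_smul, Real.norm_eq_abs,
        abs_of_nonneg (mul_nonneg hz.1 hw.1)]
    rw [hnorm] at hsc'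
    have hle : Real.exp (-(c * z * w)) ≤ Real.exp (-(M * (z * w * ‖d‖))) := by
      apply Real.exp_le_exp.2
      have : M * (z * w * ‖d‖) ≤ M * (z * w * (2 * W)) := by
        apply mul_le_mul_of_nonneg_left _ hM.le
        exact mul_le_mul_of_nonneg_left hdnorm (mul_nonneg hz.1 hw.1)
      have h2 : M * (z * w * (2 * W)) = c * z * w := by rw [hc_def]; ring
      linarith
    have : Real.exp (-(c * z * w)) * D ≤ dirD2 f (β₁ + (z * w) • d) u := by
      calc Real.exp (-(c * z * w)) * D ≤ Real.exp (-(M * (z * w * ‖d‖))) * D :=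
            mul_le_mul_of_nonneg_right hle hD0
        _ ≤ _ := hsc'
    calc z * Real.exp (-(c * z * w)) * D = z * (Real.exp (-(c * z * w)) * D) := by ring
      _ ≤ z * dirD2 f (β₁ + (z * w) • d) u := mul_le_mul_of_nonneg_left this hz.1
  -- inner integral bound for each z
  have hinner : ∀ z ∈ Set.Icc (0:ℝ) 1,
      z / (1 + c) * D ≤ ∫ w in (0:ℝ)..1, z * dirD2 f (β₁ + (z * w) • d) u := by
    intro z hz
    have hcont1 : Continuous fun w => z * Real.exp (-(c * z * w)) * D :=
      ((continuous_const.mul (Real.continuous_exp.comp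
        ((continuous_const.mul continuous_id).neg))).mul continuous_const)
    have hcont2 : Continuous fun w : ℝ => z * dirD2 f (β₁ + (z * w) • d) u := by
      apply Continuous.mul continuous_const
      exact hG.comp (continuous_const.add
        ((continuous_const.mul continuous_id).smul continuous_const))
    have hmono := intervalIntegral.integral_mono_on (μ := MeasureTheory.volume)
      (by norm_num : (0:ℝ) ≤ 1) (hcont1.intervalIntegrable 0 1)
      (hcont2.intervalIntegrable 0 1) (hpt z hz)
    refine le_trans ?_ hmono
    have heq : ∀ w : ℝ, z * Real.exp (-(c * z * w)) * D = (z * D) * Real.exp (-((c * z) * w)) := by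
      intro w; rw [mul_assoc c z w]; ring
    have : (∫ w in (0:ℝ)..1, z * Real.exp (-(c * z * w)) * D)
        = (z * D) * ∫ w in (0:ℝ)..1, Real.exp (-((c * z) * w)) := by
      simp_rw [heq]
      exact intervalIntegral.integral_const_mul _ _
    rw [this]
    have hcz : 0 ≤ c * z := mul_nonneg hc0.le hz.1
    have hkey := exp_integral_lower (c * z) hcz
    have hzd : 0 ≤ z * D := mul_nonneg hz.1 hD0
    have step1 : z * D * (1 / (1 + c * z)) ≤ z * D * ∫ w in (0:ℝ)..1, Real.exp (-((c * z) * w)) :=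
      mul_le_mul_of_nonneg_left hkey hzd
    refine le_trans ?_ step1
    have h1 : (0:ℝ) < 1 + c * z := by linarith
    have h2 : (0:ℝ) < 1 + c := by linarith
    have h3 : 1 + c * z ≤ 1 + c := by nlinarith [hz.2]
    have : 1 / (1 + c) ≤ 1 / (1 + c * z) := by
      apply div_le_div_of_nonneg_left (by norm_num) h1 h3
    calc z / (1 + c) * D = z * D * (1 / (1 + c)) := by ring
      _ ≤ z * D * (1 / (1 + c * z)) := mul_le_mul_of_nonneg_left this hzd
  -- outer integral
  have hcont_outer : Continuous fun z => ∫ w in (0:ℝ)..1, z * dirD2 f (β₁ + (z * w) • d) u := by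
    apply intervalIntegral.continuous_parametric_intervalIntegral_of_continuous'
    exact continuous_fst.mul (hG.comp (continuous_const.add
      ((continuous_fst.mul continuous_snd).smul continuous_const)))
  have hcont_lhs : Continuous fun z : ℝ => z / (1 + c) * D :=
    (continuous_id.div_const _).mul continuous_const
  have houter := intervalIntegral.integral_mono_on (μ := MeasureTheory.volume)
    (by norm_num : (0:ℝ) ≤ 1) (hcont_lhs.intervalIntegrable 0 1)
    (hcont_outer.intervalIntegrable 0 1) hinner
  refine le_trans ?_ houter
  have heq : ∀ z : ℝ, z / (1 + c) * D = z * (D / (1 + c)) := by intro z; ring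
  have : (∫ z in (0:ℝ)..1, z / (1 + c) * D) = (∫ z in (0:ℝ)..1, z) * (D / (1 + c)) := by
    simp_rw [heq]
    exact intervalIntegral.integral_mul_const _ _
  rw [this, integral_id]
  have h2 : (1:ℝ) + c ≠ 0 := ne_of_gt (by linarith)
  apply le_of_eq
  field_simp
  ring
end

section
/- Let H₀ ⪰ λ I_d with λ ≥ 1, and for t = 1,…,T let H_t = H_{t−1} + A_t where each A_t is positive semidefinite and satisfies A_t ⪰ (κ/2) g_t g_tᵀ for some vectors g_t ∈ ℝ^d and κ > 0. Then ∑_{t=1}^T g_tᵀ H_t^{-1} g_t ≤ (2/κ) log(det(H_T)/det(H₀)). -/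
open Matrix Finset

private lemma one_le_det_one_add {d : ℕ} {M : Matrix (Fin d) (Fin d) ℝ}
    (hM : M.PosSemidef) : 1 ≤ (1 + M).det := by
  have hH := hM.1
  have hspec := hH.spectral_theorem
  set U : Matrix (Fin d) (Fin d) ℝ := (hH.eigenvectorUnitary : Matrix (Fin d) (Fin d) ℝ) with hU
  set D : Matrix (Fin d) (Fin d) ℝ := diagonal (RCLike.ofReal ∘ hH.eigenvalues) with hD
  have hUU : U * star U = 1 := (Matrix.mem_unitaryGroup_iff).mp hH.eigenvectorUnitary.2
  have h1 : (1 : Matrix (Fin d) (Fin d) ℝ) + M = U * (1 + D) * star U := by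
    have hexp : U * (1 + D) * star U = U * star U + U * D * star U := by
      rw [Matrix.mul_add, Matrix.mul_one, Matrix.add_mul]
    rw [hexp, hUU, hspec, Unitary.conjStarAlgAut_apply]
  have hdetU : U.det * (star U).det = 1 := by rw [← det_mul, hUU, det_one]
  have h2 : (1 + M).det = (1 + D).det := by
    rw [h1, det_mul, det_mul]
    calc U.det * (1 + D).det * (star U).det = (1 + D).det * (U.det * (star U).det) := by ring
      _ = (1 + D).det := by rw [hdetU, mul_one]
  have h3 : (1 : Matrix (Fin d) (Fin d) ℝ) + D = diagonal (fun i => 1 + hH.eigenvalues i) := by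
    rw [hD, ← diagonal_one, diagonal_add]
    rfl
  rw [h2, h3, det_diagonal]
  calc (1:ℝ) = ∏ _i : Fin d, (1:ℝ) := by simp
    _ ≤ ∏ i : Fin d, (1 + hH.eigenvalues i) := by
        refine Finset.prod_le_prod (fun i _ => by norm_num) (fun i _ => ?_)
        have := hM.eigenvalues_nonneg i
        linarith

open scoped MatrixOrder in
private lemma det_mono {d : ℕ} {A B : Matrix (Fin d) (Fin d) ℝ}
    (hA : A.PosDef) (hB : B.PosSemidef) : A.det ≤ (A + B).det := by
  set S := CFC.sqrt A with hSdef
  have hS : S.PosSemidef := (CFC.sqrt_nonneg A).posSemidef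
  have hSS : S * S = A := CFC.sqrt_mul_sqrt_self A hA.posSemidef.nonneg
  have hdetA : 0 < A.det := hA.det_pos
  have hdetS : S.det ≠ 0 := by
    intro h
    rw [← hSS, det_mul, h, mul_zero] at hdetA
    exact lt_irrefl _ hdetA
  have hSinv : S * S⁻¹ = 1 := mul_nonsing_inv S (isUnit_iff_ne_zero.mpr hdetS)
  have hSinv' : S⁻¹ * S = 1 := nonsing_inv_mul S (isUnit_iff_ne_zero.mpr hdetS)
  set M := S⁻¹ * B * S⁻¹ with hMdef
  have hMps : M.PosSemidef := by
    have hinv : S⁻¹.PosSemidef := hS.inv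
    have : ((S⁻¹)ᴴ * B * S⁻¹).PosSemidef := hB.conjTranspose_mul_mul_same S⁻¹
    rwa [hinv.1] at this
  have hfact : A + B = S * (1 + M) * S := by
    rw [Matrix.mul_add, Matrix.add_mul, Matrix.mul_one, hSS, hMdef]
    congr 1
    symm
    calc S * (S⁻¹ * B * S⁻¹) * S = (S * S⁻¹) * B * (S⁻¹ * S) := by
          simp only [Matrix.mul_assoc]
      _ = B := by rw [hSinv, hSinv', Matrix.one_mul, Matrix.mul_one]
  have h1 : (1:ℝ) ≤ (1 + M).det := one_le_det_one_add hMps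
  have hAS : A.det = S.det * S.det := by rw [← hSS, det_mul]
  have hSsq : 0 < S.det * S.det := hAS ▸ hdetA
  calc A.det = S.det * S.det * 1 := by rw [hAS, mul_one]
    _ ≤ S.det * S.det * (1 + M).det := by nlinarith
    _ = (A + B).det := by rw [hfact, det_mul, det_mul]; ring

private lemma det_sub_rank_one {d : ℕ} {Hm : Matrix (Fin d) (Fin d) ℝ}
    (hH : Hm.PosDef) (c : ℝ) (g : Fin d → ℝ) :
    (Hm - c • vecMulVec g g).det = Hm.det * (1 - c * (g ⬝ᵥ Hm⁻¹.mulVec g)) := by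
  have hdet : Hm.det ≠ 0 := ne_of_gt hH.det_pos
  have hHinv : Hm * Hm⁻¹ = 1 := mul_nonsing_inv Hm (isUnit_iff_ne_zero.mpr hdet)
  have hmulV : Hm⁻¹ * vecMulVec g g = vecMulVec (Hm⁻¹.mulVec g) g := by
    ext i j
    simp [Matrix.mul_apply, vecMulVec_apply, Matrix.mulVec, dotProduct,
      Finset.sum_mul, mul_assoc]
  have hfact : Hm - c • vecMulVec g g = Hm * (1 - c • (vecMulVec (Hm⁻¹.mulVec g) g)) := by
    rw [Matrix.mul_sub, Matrix.mul_one, Matrix.mul_smul, ← hmulV, ← Matrix.mul_assoc,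
      hHinv, Matrix.one_mul]
  rw [hfact, det_mul]
  congr 1
  have : (1 : Matrix (Fin d) (Fin d) ℝ) - c • vecMulVec (Hm⁻¹.mulVec g) g
      = 1 + replicateCol Unit (-(c • Hm⁻¹.mulVec g)) * replicateRow Unit g := by
    rw [sub_eq_add_neg]
    congr 1
    rw [← vecMulVec_eq Unit]
    ext i j
    simp [vecMulVec_apply]
    ring
  rw [this, det_one_add_replicateCol_mul_replicateRow]
  simp [dotProduct, Finset.mul_sum]
  ring_nf
  simp [mul_comm]

private lemma step_lemma {d : ℕ} {H' A : Matrix (Fin d) (Fin d) ℝ} {g : Fin d → ℝ} {c : ℝ}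
    (hc : 0 < c) (hH' : H'.PosDef) (hA : A.PosSemidef)
    (hAg : (A - c • vecMulVec g g).PosSemidef) :
    c * (g ⬝ᵥ (H' + A)⁻¹.mulVec g) ≤ Real.log (H' + A).det - Real.log H'.det := by
  set Hm := H' + A with hHm
  have hH : Hm.PosDef := hH'.add_posSemidef hA
  set q := g ⬝ᵥ Hm⁻¹.mulVec g with hq
  have hdetH : 0 < Hm.det := hH.det_pos
  have hdetH' : 0 < H'.det := hH'.det_pos
  have hKeq : Hm - c • vecMulVec g g = H' + (A - c • vecMulVec g g) := by
    rw [hHm, add_sub_assoc]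
  have h1 : H'.det ≤ Hm.det * (1 - c * q) := by
    rw [← det_sub_rank_one hH c g, hKeq]
    exact det_mono hH' hAg
  have hratio : 0 < H'.det / Hm.det := div_pos hdetH' hdetH
  have hlog : Real.log (H'.det / Hm.det) ≤ H'.det / Hm.det - 1 :=
    Real.log_le_sub_one_of_pos hratio
  have hlogdiv : Real.log (H'.det / Hm.det) = Real.log H'.det - Real.log Hm.det :=
    Real.log_div (ne_of_gt hdetH') (ne_of_gt hdetH)
  have h2 : H'.det / Hm.det ≤ 1 - c * q := by
    rw [div_le_iff₀ hdetH]; linarith [h1]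
  linarith [hlog, hlogdiv.symm ▸ hlog, h2]

theorem stmt_11 (d T : ℕ) (H A : ℕ → Matrix (Fin d) (Fin d) ℝ) (g : ℕ → Fin d → ℝ)
    (lam κ : ℝ) (hlam : 1 ≤ lam) (hκ : 0 < κ)
    (hH0 : Matrix.PosSemidef (H 0 - lam • (1 : Matrix (Fin d) (Fin d) ℝ)))
    (hHsym : (H 0).IsHermitian)
    (hrec : ∀ t, 1 ≤ t → t ≤ T → H t = H (t - 1) + A t)
    (hA : ∀ t, 1 ≤ t → t ≤ T → Matrix.PosSemidef (A t))
    (hAg : ∀ t, 1 ≤ t → t ≤ T →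
      Matrix.PosSemidef (A t - (κ / 2) • vecMulVec (g t) (g t))) :
    ∑ t ∈ Finset.Icc 1 T, g t ⬝ᵥ (H t)⁻¹.mulVec (g t) ≤
      (2 / κ) * Real.log ((H T).det / (H 0).det) := by
  have hc : (0:ℝ) < κ / 2 := by linarith
  have hH0pd : (H 0).PosDef := by
    have hlamI : (lam • (1 : Matrix (Fin d) (Fin d) ℝ)).PosDef := by
      rw [smul_one_eq_diagonal]
      exact Matrix.PosDef.diagonal fun _ => by linarith
    have := hlamI.add_posSemidef hH0
    simpa using this
  have hpos : ∀ t, t ≤ T → (H t).PosDef := by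
    intro t
    induction t with
    | zero => intro _; exact hH0pd
    | succ n ih =>
      intro hn
      have hn' : n ≤ T := Nat.le_of_succ_le hn
      rw [hrec (n+1) (Nat.succ_le_succ (Nat.zero_le n)) hn, Nat.add_sub_cancel]
      exact (ih hn').add_posSemidef (hA (n+1) (Nat.succ_le_succ (Nat.zero_le n)) hn)
  have key : ∀ N, N ≤ T →
      ∑ t ∈ Finset.Icc 1 N, g t ⬝ᵥ (H t)⁻¹.mulVec (g t) ≤
        (2 / κ) * (Real.log (H N).det - Real.log (H 0).det) := by
    intro N
    induction N with
    | zero => intro _; simp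
    | succ n ih =>
      intro hn
      have hn' : n ≤ T := Nat.le_of_succ_le hn
      have h1n : 1 ≤ n + 1 := Nat.succ_le_succ (Nat.zero_le n)
      rw [Finset.sum_Icc_succ_top h1n]
      have hHrec : H (n+1) = H n + A (n+1) := by
        have := hrec (n+1) h1n hn
        rwa [Nat.add_sub_cancel] at this
      have hstep := step_lemma hc (hpos n hn') (hA (n+1) h1n hn) (hAg (n+1) h1n hn)
      rw [← hHrec] at hstep
      have hterm : g (n+1) ⬝ᵥ (H (n+1))⁻¹.mulVec (g (n+1)) ≤
          (2 / κ) * (Real.log (H (n+1)).det - Real.log (H n).det) := by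
        have h2κ : (2 / κ) * (κ / 2) = 1 := by field_simp
        calc g (n+1) ⬝ᵥ (H (n+1))⁻¹.mulVec (g (n+1))
            = (2 / κ) * ((κ / 2) * (g (n+1) ⬝ᵥ (H (n+1))⁻¹.mulVec (g (n+1)))) := by
              rw [← mul_assoc, h2κ, one_mul]
          _ ≤ (2 / κ) * (Real.log (H (n+1)).det - Real.log (H n).det) := by
              apply mul_le_mul_of_nonneg_left hstep
              positivity
      have := ih hn'
      linarith
  have hfin := key T le_rfl
  rwa [Real.log_div (ne_of_gt (hpos T le_rfl).det_pos) (ne_of_gt hH0pd.det_pos)]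
end

section
/- Let k ≥ 1, let u_1 ≤ … ≤ u_k and u*_1 ≤ … ≤ u*_k be real numbers with u_i ≤ u*_i for all i. Define g(u) = ∑_{j=1}^k e^{u_j} / (1 + ∑_{j=1}^k e^{u_j})². Then g(u) − g(u*) ≤ Q(u*) − Q(u), where Q(u) = ∑_{j=1}^k e^{u_j}/(1 + ∑_{j=1}^k e^{u_j}). -/
/-!
With `S = ∑ j, exp (u j)` one has `g + Q = S / (1 + S) + S / (1 + S) ^ 2 = 1 - 1 / (1 + S) ^ 2`,
which is increasing in `S`; and `S` increases from `u` to `ustar`.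
-/

open Finset

lemma div_one_add_add_div_one_add_sq {x : ℝ} (hx : 1 + x ≠ 0) :
    x / (1 + x) + x / (1 + x) ^ 2 = 1 - ((1 + x) ^ 2)⁻¹ := by
  field_simp
  ring

lemma monotoneOn_div_one_add_add_div_one_add_sq :
    MonotoneOn (fun x : ℝ => x / (1 + x) + x / (1 + x) ^ 2) (Set.Ioi (-1)) := by
  intro x hx y hy hxy
  have hx' : 0 < 1 + x := by linarith [Set.mem_Ioi.mp hx]
  have hy' : 0 < 1 + y := by linarith [Set.mem_Ioi.mp hy]
  simp only [div_one_add_add_div_one_add_sq hx'.ne', div_one_add_add_div_one_add_sq hy'.ne']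
  gcongr

theorem stmt_18_general (k : ℕ) (u ustar : Fin k → ℝ)
    (hle : ∀ i, u i ≤ ustar i) :
    (∑ j, Real.exp (u j)) / (1 + ∑ j, Real.exp (u j)) ^ 2 -
      (∑ j, Real.exp (ustar j)) / (1 + ∑ j, Real.exp (ustar j)) ^ 2 ≤
    (∑ j, Real.exp (ustar j)) / (1 + ∑ j, Real.exp (ustar j)) -
      (∑ j, Real.exp (u j)) / (1 + ∑ j, Real.exp (u j)) := by
  have hS : (0 : ℝ) ≤ ∑ j, Real.exp (u j) := sum_nonneg fun j _ => (Real.exp_pos _).le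
  have hST : ∑ j, Real.exp (u j) ≤ ∑ j, Real.exp (ustar j) :=
    sum_le_sum fun j _ => Real.exp_le_exp.mpr (hle j)
  have hmono := monotoneOn_div_one_add_add_div_one_add_sq
    (Set.mem_Ioi.mpr (by linarith)) (Set.mem_Ioi.mpr (by linarith)) hST
  simp only at hmono
  linarith

theorem stmt_18 (k : ℕ) (hk : 1 ≤ k) (u ustar : Fin k → ℝ)
    (hu : Monotone u) (hustar : Monotone ustar) (hle : ∀ i, u i ≤ ustar i) :
    (∑ j, Real.exp (u j)) / (1 + ∑ j, Real.exp (u j)) ^ 2 -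
      (∑ j, Real.exp (ustar j)) / (1 + ∑ j, Real.exp (ustar j)) ^ 2 ≤
    (∑ j, Real.exp (ustar j)) / (1 + ∑ j, Real.exp (ustar j)) -
      (∑ j, Real.exp (u j)) / (1 + ∑ j, Real.exp (u j)) :=
  stmt_18_general k u ustar hle
end
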